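/- arXiv:2001.00763 — 2 statements merged into one kernel-verified Lean document; each statement's English description precedes it below -/
import Mathlib

section
/- Let G be a graph on n ≥ 3 vertices and for each vertex v of G let G_v denote the induced subgraph of G on the remaining n−1 vertices. Then η(G) ≥ min over vertices v of η(G_v), where η(H) := ν*(H)/(|H|·(|H|−1)). -/
open Finset
open scoped Classical

variable {V : Type*}

/-- A triangle packing of `G`: a finite collection of triangles (3-cliques) of `G` that are
pairwise edge-disjoint (i.e. any two distinct members share at most one vertex). -/
def SimpleGraph.IsTrianglePacking [DecidableEq V] (G : SimpleGraph V)
    (P : Finset (Finset V)) : Prop :=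
  (∀ T ∈ P, G.IsNClique 3 T) ∧
    (P : Set (Finset V)).Pairwise fun S T => (S ∩ T).card ≤ 1

/-- The maximum size (number of edges, i.e. `3 * number of triangles`) of a triangle packing. -/
noncomputable def SimpleGraph.triangleNu [DecidableEq V] (G : SimpleGraph V) : ℕ :=
  sSup {m | ∃ P : Finset (Finset V), G.IsTrianglePacking P ∧ m = 3 * P.card}

/-- A fractional triangle packing of `G`: a weight function on triples of vertices, supported
on triangles of `G`, with values in `[0,1]`, such that every edge carries total weight ≤ 1. -/
def SimpleGraph.IsFracTrianglePacking [Fintype V] [DecidableEq V] (G : SimpleGraph V)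
    (w : Finset V → ℝ) : Prop :=
  (∀ T, 0 ≤ w T ∧ w T ≤ 1) ∧
  (∀ T, ¬ G.IsNClique 3 T → w T = 0) ∧
  ∀ u v : V, G.Adj u v →
    ∑ T ∈ univ.filter (fun T : Finset V => G.IsNClique 3 T ∧ u ∈ T ∧ v ∈ T), w T ≤ 1

/-- `ν*(G)`: the maximum size `3 ∑ w(T)` of a fractional triangle packing of `G`. -/
noncomputable def SimpleGraph.nuStar [Fintype V] [DecidableEq V] (G : SimpleGraph V) : ℝ :=
  sSup {x | ∃ w : Finset V → ℝ, G.IsFracTrianglePacking w ∧ x = 3 * ∑ T : Finset V, w T}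

/-- `η(G) = ν*(G)/(n(n-1))` where `n = |V(G)|`. -/
noncomputable def SimpleGraph.etaPack [Fintype V] [DecidableEq V] (G : SimpleGraph V) : ℝ :=
  G.nuStar / ((Fintype.card V : ℝ) * ((Fintype.card V : ℝ) - 1))

/-- A fractional triangle decomposition: a fractional packing with equality on every edge. -/
def SimpleGraph.IsFracTriangleDecomposition [Fintype V] [DecidableEq V] (G : SimpleGraph V)
    (w : Finset V → ℝ) : Prop :=
  G.IsFracTrianglePacking w ∧
  ∀ u v : V, G.Adj u v →
    ∑ T ∈ univ.filter (fun T : Finset V => G.IsNClique 3 T ∧ u ∈ T ∧ v ∈ T), w T = 1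

/-- `G` is `ε`-far from bipartite: every bipartite subgraph misses at least `ε n²` edges. -/
def FarFromBipartite [Fintype V] [DecidableEq V] (ε : ℝ) (G : SimpleGraph V) : Prop :=
  ∀ H : SimpleGraph V, H ≤ G → H.Colorable 2 →
    ε * (Fintype.card V : ℝ) ^ 2 ≤ (G.edgeFinset.card : ℝ) - (H.edgeFinset.card : ℝ)

/-- The disjoint union of two cliques on `⌈n/2⌉`-ish halves of `Fin n`
(the first `n/2` vertices form one clique, the rest form the other). -/
def twoCliques (n : ℕ) : SimpleGraph (Fin n) where
  Adj u v := u ≠ v ∧ ((u : ℕ) < n / 2 ↔ (v : ℕ) < n / 2)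
  symm := by refine ⟨?_⟩; intro u v h; exact ⟨h.1.symm, h.2.symm⟩
  loopless := by refine ⟨?_⟩; intro u h; exact h.1 rfl

/-- `g(n)`: minimum over co-triangle-free `n`-vertex graphs of the max triangle packing size. -/
noncomputable def gInt (n : ℕ) : ℕ :=
  sInf {m | ∃ G : SimpleGraph (Fin n), Gᶜ.CliqueFree 3 ∧ m = G.triangleNu}

/-- `g*(n)`: minimum over co-triangle-free `n`-vertex graphs of `ν*`. -/
noncomputable def gStar (n : ℕ) : ℝ :=
  sInf {x | ∃ G : SimpleGraph (Fin n), Gᶜ.CliqueFree 3 ∧ x = G.nuStar}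

/-!
Let `n = |V|`. For each vertex `x` take a near-optimal fractional packing of `G - x` and view it
as a weight on the triangles of `G`. An edge `uv` lies in `G - x` for exactly the `n - 2`
vertices `x ∉ {u, v}`, so the sum of these weights divided by `n - 2` is a fractional packing
of `G`. Hence `(n - 2) ν*(G) ≥ ∑ₓ ν*(G - x) ≥ n · minₓ ν*(G - x)`, which rearranges to
`η(G) ≥ minₓ η(G - x)` since `(n - 1)(n - 2)` is the normalisation of `η(G - x)`.
-/

section pushWeight

variable {W V : Type*} [Fintype W] [DecidableEq V]

noncomputable def pushWeight (f : W ↪ V) (w : Finset W → ℝ) (T : Finset V) : ℝ :=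
  ∑ T' ∈ univ.filter fun T' => T'.map f = T, w T'

lemma sum_pushWeight [Fintype V] (f : W ↪ V) (w : Finset W → ℝ) :
    ∑ T, pushWeight f w T = ∑ T', w T' :=
  sum_fiberwise_of_maps_to (fun T' _ => mem_univ (T'.map f)) w

lemma pushWeight_eq_zero_of_mem {f : W ↪ V} {w : Finset W → ℝ} {T : Finset V} {a : V}
    (ha : a ∈ T) (hf : a ∉ Set.range f) : pushWeight f w T = 0 := by
  refine sum_eq_zero fun T' hT' => ?_
  rw [← (mem_filter.1 hT').2, mem_map] at ha
  obtain ⟨b, -, rfl⟩ := ha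
  exact absurd ⟨b, rfl⟩ hf

end pushWeight

namespace SimpleGraph

variable {V : Type*} [Fintype V] [DecidableEq V] (G : SimpleGraph V)

noncomputable def trianglesThrough (u v : V) : Finset (Finset V) :=
  univ.filter fun T : Finset V => G.IsNClique 3 T ∧ u ∈ T ∧ v ∈ T

@[simp]
lemma mem_trianglesThrough {u v : V} {T : Finset V} :
    T ∈ G.trianglesThrough u v ↔ G.IsNClique 3 T ∧ u ∈ T ∧ v ∈ T := by
  simp [trianglesThrough]

lemma isFracTrianglePacking_zero : G.IsFracTrianglePacking fun _ => 0 :=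
  ⟨fun _ => ⟨le_rfl, zero_le_one⟩, fun _ _ => rfl, fun _ _ _ => by simp⟩

variable {G}

/-- The bound `w T ≤ 1` is implied by the edge constraint at any edge of the triangle `T`. -/
lemma IsFracTrianglePacking.of_nonneg {w : Finset V → ℝ} (h0 : ∀ T, 0 ≤ w T)
    (hsupp : ∀ T, ¬ G.IsNClique 3 T → w T = 0)
    (hedge : ∀ u v, G.Adj u v → ∑ T ∈ G.trianglesThrough u v, w T ≤ 1) :
    G.IsFracTrianglePacking w := by
  refine ⟨fun T => ⟨h0 T, ?_⟩, hsupp, hedge⟩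
  by_cases hT : G.IsNClique 3 T
  · obtain ⟨a, ha, b, hb, hab⟩ := one_lt_card.1 (by rw [hT.card_eq]; norm_num)
    calc w T ≤ ∑ T ∈ G.trianglesThrough a b, w T :=
          single_le_sum (fun T _ => h0 T) (by simp [hT, ha, hb])
      _ ≤ 1 := hedge a b (hT.1 ha hb hab)
  · simp [hsupp T hT]

lemma IsFracTrianglePacking.three_mul_sum_le_nuStar {w : Finset V → ℝ}
    (hw : G.IsFracTrianglePacking w) : 3 * ∑ T, w T ≤ G.nuStar := by
  refine le_csSup ⟨3 * Fintype.card (Finset V), ?_⟩ ⟨w, hw, rfl⟩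
  rintro _ ⟨w', hw', rfl⟩
  have := sum_le_card_nsmul univ w' 1 fun T _ => (hw'.1 T).2
  simp only [card_univ, nsmul_eq_mul, mul_one] at this
  linarith

lemma exists_isFracTrianglePacking_lt_three_mul_sum {c : ℝ} (hc : c < G.nuStar) :
    ∃ w, G.IsFracTrianglePacking w ∧ c < 3 * ∑ T, w T := by
  have hne : {x | ∃ w, G.IsFracTrianglePacking w ∧ x = 3 * ∑ T, w T}.Nonempty :=
    ⟨0, _, G.isFracTrianglePacking_zero, by simp⟩
  obtain ⟨_, ⟨w, hw, rfl⟩, hlt⟩ := exists_lt_of_lt_csSup hne hc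
  exact ⟨w, hw, hlt⟩

lemma isFracTrianglePacking_inv_mul_sum {ι : Type*} [Fintype ι] {W : ι → Finset V → ℝ}
    (hW : ∀ i, G.IsFracTrianglePacking (W i)) {k : ℝ} (hk : 0 < k)
    (hsparse : ∀ u v, G.Adj u v → ∃ s : Finset ι, (s.card : ℝ) ≤ k ∧
      ∀ i ∉ s, ∀ T ∈ G.trianglesThrough u v, W i T = 0) :
    G.IsFracTrianglePacking fun T => k⁻¹ * ∑ i, W i T := by
  refine .of_nonneg
    (fun T => mul_nonneg (inv_nonneg.2 hk.le) (sum_nonneg fun i _ => ((hW i).1 T).1))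
    (fun T hT => by simp [(hW _).2.1 T hT]) fun u v huv => ?_
  obtain ⟨s, hs, hzero⟩ := hsparse u v huv
  calc ∑ T ∈ G.trianglesThrough u v, k⁻¹ * ∑ i, W i T
      = k⁻¹ * ∑ i ∈ s, ∑ T ∈ G.trianglesThrough u v, W i T := by
        rw [← mul_sum, sum_comm, ← sum_subset (subset_univ s)
          fun i _ hi => sum_eq_zero (hzero i hi)]
    _ ≤ k⁻¹ * (s.card • 1) := by
        gcongr
        exact sum_le_card_nsmul _ _ _ fun i _ => (hW i).2.2 u v huv
    _ ≤ 1 := by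
        rw [nsmul_eq_mul, mul_one, inv_mul_le_one₀ hk]
        exact hs

lemma IsFracTrianglePacking.pushWeight_subtype {s : Set V} [Fintype s] {w : Finset s → ℝ}
    (hw : (G.induce s).IsFracTrianglePacking w) :
    G.IsFracTrianglePacking (pushWeight (.subtype _) w) := by
  refine .of_nonneg (fun T => sum_nonneg fun T' _ => (hw.1 T').1)
    (fun T hT => sum_eq_zero fun T' hT' => hw.2.1 T' ?_) fun a b hab => ?_
  · rwa [isNClique_induce_iff, (mem_filter.1 hT').2]
  simp only [pushWeight]
  rw [sum_fiberwise_eq_sum_filter]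
  obtain hempty | ⟨T', hT'⟩ := (univ.filter fun T' : Finset s =>
    T'.map (.subtype _) ∈ G.trianglesThrough a b).eq_empty_or_nonempty
  · rw [hempty, sum_empty]
    exact zero_le_one
  simp only [mem_filter, mem_univ, true_and, mem_trianglesThrough, mem_map,
    Function.Embedding.coe_subtype] at hT'
  obtain ⟨-, ⟨a', -, rfl⟩, ⟨b', -, rfl⟩⟩ := hT'
  refine (sum_le_sum_of_subset_of_nonneg (fun T'' hT'' => ?_) fun T _ _ => (hw.1 T).1).trans
    (hw.2.2 a' b' hab)
  simp only [mem_filter, mem_univ, true_and, mem_trianglesThrough, mem_map,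
    Function.Embedding.coe_subtype, Subtype.val_inj, exists_eq_right] at hT'' ⊢
  exact ⟨(isNClique_induce_iff _ _ _).2 hT''.1, hT''.2⟩

theorem card_mul_le_card_sub_two_mul_nuStar (hn : 3 ≤ Fintype.card V) {c : ℝ}
    (hc : ∀ v : V, c < (G.induce ({v}ᶜ : Set V)).nuStar) :
    Fintype.card V * c ≤ (Fintype.card V - 2) * G.nuStar := by
  choose w hw hlt using fun v => exists_isFracTrianglePacking_lt_three_mul_sum (hc v)
  set W : V → Finset V → ℝ := fun v => pushWeight (.subtype _) (w v)
  have hk : (0 : ℝ) < Fintype.card V - 2 := by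
    have : (3 : ℝ) ≤ Fintype.card V := by exact_mod_cast hn
    linarith
  have hpack := isFracTrianglePacking_inv_mul_sum (W := W) (fun v => (hw v).pushWeight_subtype)
    hk fun u u' huu' => by
      refine ⟨{u, u'}ᶜ, ?_, fun v hv T hT => ?_⟩
      · rw [card_compl, card_pair (G.ne_of_adj huu'), Nat.cast_sub (by omega)]
        norm_num
      · rw [mem_compl, not_not, mem_insert, mem_singleton] at hv
        rw [mem_trianglesThrough] at hT
        refine pushWeight_eq_zero_of_mem (a := v) ?_ (by simp)
        rcases hv with rfl | rfl
        exacts [hT.2.1, hT.2.2]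
  calc Fintype.card V * c = ∑ _v : V, c := by simp
    _ ≤ ∑ v, 3 * ∑ T', w v T' := sum_le_sum fun v _ => (hlt v).le
    _ = (Fintype.card V - 2) * (3 * ∑ T, (Fintype.card V - 2 : ℝ)⁻¹ * ∑ v, W v T) := by
        simp only [← mul_sum, sum_comm (s := univ (α := Finset V)), W, sum_pushWeight]
        field_simp
    _ ≤ (Fintype.card V - 2) * G.nuStar := by
        gcongr
        exact hpack.three_mul_sum_le_nuStar

end SimpleGraph

/-- `η(G) ≥ min_v η(G_v)`. -/
theorem stmt5 {V : Type*} [Fintype V] [DecidableEq V] (G : SimpleGraph V)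
    (hn : 3 ≤ Fintype.card V) :
    (⨅ v : V, (G.induce ({v}ᶜ : Set V)).etaPack) ≤ G.etaPack := by
  have hn' : (3 : ℝ) ≤ Fintype.card V := by exact_mod_cast hn
  have hcard (v : V) : (Fintype.card ({v}ᶜ : Set V) : ℝ) = Fintype.card V - 1 := by
    rw [Fintype.card_compl_set, Set.card_singleton, Nat.cast_sub (by omega)]
    norm_num
  refine le_of_forall_lt_imp_le_of_dense fun c hc => ?_
  have hlt (v : V) : c * ((Fintype.card V - 1) * (Fintype.card V - 2)) <
      (G.induce ({v}ᶜ : Set V)).nuStar := by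
    have := hc.trans_le (ciInf_le (Finite.bddBelow_range _) v)
    rwa [SimpleGraph.etaPack, hcard, sub_sub, one_add_one_eq_two,
      lt_div_iff₀ (by nlinarith)] at this
  have := G.card_mul_le_card_sub_two_mul_nuStar hn hlt
  rw [SimpleGraph.etaPack, le_div_iff₀ (by nlinarith)]
  nlinarith
end

section
/- Let n be even and let G be a graph obtained from the complete bipartite graph K_{n/2,n/2} by adding ℓ ≤ n/8 edges inside the two sides. Then ν(G) + ν(complement of G) ≤ 2·C(n/2,2) + 2ℓ ≤ n(n−1)/4, where ν denotes the maximum size of a triangle packing; that is, the largest monochromatic triangle packing in the 2-colouring of K_n given by G and its complement has size at most n(n−1)/4. -/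
open Finset
open scoped Classical

variable {V : Type*}

/-!
Write `m = n / 2`. Every triangle of `G = K_{m,m} ∪ E` has two vertices on the same side, so
it contains an edge of `E`; edge-disjoint triangles contain distinct such edges, whence
`ν(G) ≤ 3ℓ`. The complement of `G` is `2 K_m` minus `E`, and a packing uses at most all of its
`2 C(m,2) - ℓ` edges. Since `n(n-1)/4 - 2 C(m,2) = m / 2`, the second bound is `2ℓ ≤ m / 2`.
-/

namespace SimpleGraph

lemma card_filter_adj_eq_two_mul_card_edgeFinset [Fintype V] (F : SimpleGraph V) :
    #{p : V × V | F.Adj p.1 p.2} = 2 * #F.edgeFinset := by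
  have : ({p : V × V | F.Adj p.1 p.2} : Finset (V × V))
      = (univ : Finset F.Dart).map ⟨Dart.toProd, Dart.toProd_injective⟩ := by
    ext p
    simp only [mem_filter, mem_univ, true_and, mem_map, Function.Embedding.coeFn_mk]
    exact ⟨fun h => ⟨⟨p, h⟩, rfl⟩, by rintro ⟨d, -, rfl⟩; exact d.adj⟩
  rw [this, card_map, card_univ, dart_card_eq_twice_card_edges]

variable [DecidableEq V]

lemma triangleNu_le_of_forall {H : SimpleGraph V} {k : ℕ}
    (h : ∀ P, H.IsTrianglePacking P → 3 * #P ≤ k) : H.triangleNu ≤ k := by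
  refine csSup_le ⟨0, ∅, ⟨by simp, by simp⟩, rfl⟩ ?_
  rintro m ⟨P, hP, rfl⟩
  exact h P hP

variable [Fintype V]

/-- Edge-disjoint vertex sets have disjoint sets of ordered pairs, so together they contain each
edge of `F` at most twice. -/
lemma sum_card_filter_adj_offDiag_le {P : Finset (Finset V)}
    (hP : (P : Set (Finset V)).Pairwise fun S T => #(S ∩ T) ≤ 1) (F : SimpleGraph V) :
    ∑ T ∈ P, #{p ∈ T.offDiag | F.Adj p.1 p.2} ≤ 2 * #F.edgeFinset := by
  have hdisj :
      (P : Set (Finset V)).PairwiseDisjoint fun T => {p ∈ T.offDiag | F.Adj p.1 p.2} := by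
    intro S hS T hT hST
    rw [Function.onFun, Finset.disjoint_left]
    refine fun p hpS hpT => (hP hS hT hST).not_gt ?_
    simp only [mem_filter, mem_offDiag] at hpS hpT
    exact one_lt_card.2 ⟨p.1, by simp [hpS, hpT], p.2, by simp [hpS, hpT], hpS.1.2.2⟩
  rw [← card_biUnion hdisj, ← card_filter_adj_eq_two_mul_card_edgeFinset]
  refine card_le_card fun p hp => ?_
  obtain ⟨T, -, hp⟩ := mem_biUnion.1 hp
  exact mem_filter.2 ⟨mem_univ _, (mem_filter.1 hp).2⟩

lemma IsTrianglePacking.three_mul_card_le {H : SimpleGraph V} {P : Finset (Finset V)}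
    (hP : H.IsTrianglePacking P) : 3 * #P ≤ #H.edgeFinset := by
  have hsix : ∀ T ∈ P, #{p ∈ T.offDiag | H.Adj p.1 p.2} = 6 := by
    intro T hT
    obtain ⟨hclique, hcard⟩ := hP.1 T hT
    rw [filter_true_of_mem fun p hp => by
      obtain ⟨h1, h2, hne⟩ := mem_offDiag.1 hp
      exact hclique h1 h2 hne, offDiag_card, hcard]
  have := sum_card_filter_adj_offDiag_le hP.2 H
  rw [sum_congr rfl hsix, sum_const, smul_eq_mul] at this
  omega

lemma card_le_card_edgeFinset_of_forall_exists_adj {P : Finset (Finset V)}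
    (hP : (P : Set (Finset V)).Pairwise fun S T => #(S ∩ T) ≤ 1) (F : SimpleGraph V)
    (h : ∀ T ∈ P, ∃ u ∈ T, ∃ v ∈ T, F.Adj u v) : #P ≤ #F.edgeFinset := by
  have htwo : ∀ T ∈ P, 2 ≤ #{p ∈ T.offDiag | F.Adj p.1 p.2} := by
    intro T hT
    obtain ⟨u, hu, v, hv, huv⟩ := h T hT
    have hsub : {(u, v), (v, u)} ⊆ {p ∈ T.offDiag | F.Adj p.1 p.2} := by
      intro p hp
      simp only [mem_insert, mem_singleton] at hp
      rcases hp with rfl | rfl <;> simp [hu, hv, huv.ne, huv.ne.symm, huv, huv.symm]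
    refine le_trans ?_ (card_le_card hsub)
    rw [card_pair (by simp [huv.ne])]
  have := (sum_card_filter_adj_offDiag_le hP F).trans' (card_nsmul_le_sum P _ 2 htwo)
  rw [smul_eq_mul] at this
  omega

lemma triangleNu_le_card_edgeFinset (H : SimpleGraph V) : H.triangleNu ≤ #H.edgeFinset :=
  triangleNu_le_of_forall fun _ hP => hP.three_mul_card_le

lemma triangleNu_le_three_mul_of_forall_exists_adj (H F : SimpleGraph V)
    (h : ∀ T, H.IsNClique 3 T → ∃ u ∈ T, ∃ v ∈ T, F.Adj u v) :
    H.triangleNu ≤ 3 * #F.edgeFinset :=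
  triangleNu_le_of_forall fun _ hP => Nat.mul_le_mul_left 3 <|
    card_le_card_edgeFinset_of_forall_exists_adj hP.2 F fun T hT => h T (hP.1 T hT)

lemma triangleNu_sdiff_add_card_edgeFinset_le {E F : SimpleGraph V} (hE : E ≤ F) :
    (F \ E).triangleNu + #E.edgeFinset ≤ #F.edgeFinset := by
  have hsub : E.edgeFinset ⊆ F.edgeFinset := edgeFinset_mono hE
  have hnu : (F \ E).triangleNu ≤ #(F \ E).edgeFinset := by
    convert (F \ E).triangleNu_le_card_edgeFinset
  have hsdiff : #(F \ E).edgeFinset = #F.edgeFinset - #E.edgeFinset := by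
    rw [← card_sdiff_of_subset hsub]; congr 1; ext; simp
  have := card_le_card hsub
  omega

end SimpleGraph

open SimpleGraph

lemma exists_twoCliques_adj_of_two_lt_card {n : ℕ} {T : Finset (Fin n)} (hT : 2 < #T) :
    ∃ u ∈ T, ∃ v ∈ T, (twoCliques n).Adj u v := by
  obtain ⟨u, hu, v, hv, huv, hside⟩ := exists_ne_map_eq_of_card_lt_of_maps_to
    (t := (univ : Finset Bool)) (f := fun v : Fin n => decide ((v : ℕ) < n / 2))
    (by simpa using hT) (fun _ _ => mem_univ _)
  exact ⟨u, hu, v, hv, huv, by simpa using hside⟩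

lemma triangleNu_compl_twoCliques_sup_le {n : ℕ} (E : SimpleGraph (Fin n)) :
    ((twoCliques n)ᶜ ⊔ E).triangleNu ≤ 3 * #E.edgeFinset := by
  refine triangleNu_le_three_mul_of_forall_exists_adj _ E fun T hT => ?_
  obtain ⟨u, hu, v, hv, huv⟩ :=
    exists_twoCliques_adj_of_two_lt_card (by rw [hT.card_eq]; norm_num)
  refine ⟨u, hu, v, hv, ?_⟩
  have := hT.1 hu hv huv.1
  rw [sup_adj, compl_adj] at this
  exact this.resolve_left fun h => h.2 huv

lemma card_edgeFinset_twoCliques (n : ℕ) :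
    #(twoCliques n).edgeFinset = (n / 2).choose 2 + (n - n / 2).choose 2 := by
  set L : Finset (Fin n) := {v | (v : ℕ) < n / 2}
  set R : Finset (Fin n) := {v | ¬ (v : ℕ) < n / 2}
  have hL : #L = n / 2 := by simp [L, Fin.card_filter_val_lt]; omega
  have hR : #R = n - n / 2 := by
    have := card_filter_add_card_filter_not (s := (univ : Finset (Fin n)))
      fun v : Fin n => (v : ℕ) < n / 2
    rw [card_univ, Fintype.card_fin] at this
    change #L + #R = n at this
    omega
  have hpairs : ({p : Fin n × Fin n | (twoCliques n).Adj p.1 p.2} : Finset _)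
      = L.offDiag ∪ R.offDiag := by
    ext p
    simp only [mem_filter, mem_univ, true_and, mem_union, mem_offDiag, L, R]
    simp only [twoCliques]
    tauto
  have hdisj : Disjoint L.offDiag R.offDiag := by
    refine disjoint_left.2 fun p hL hR => ?_
    simp only [mem_offDiag, mem_filter, L, R] at hL hR
    exact hR.1.2 hL.1.2
  have := card_filter_adj_eq_two_mul_card_edgeFinset (twoCliques n)
  rw [hpairs, card_union_of_disjoint hdisj, offDiag_card, offDiag_card, hL, hR] at this
  have hchoose : ∀ k : ℕ, 2 * k.choose 2 = k * k - k := fun k => by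
    rw [Nat.choose_two_right, Nat.mul_div_cancel' (Nat.even_mul_pred_self k).two_dvd,
      Nat.mul_sub_one]
  have := hchoose (n / 2)
  have := hchoose (n - n / 2)
  omega

/-- adding `ℓ ≤ n/8` edges inside the sides of `K_{n/2,n/2}` yields a colouring
whose largest monochromatic triangle packing has size at most
`2·C(n/2,2) + 2ℓ ≤ n(n-1)/4`. -/
theorem stmt14 (n ℓ : ℕ) (hn : Even n) (E : SimpleGraph (Fin n))
    (hE : E ≤ twoCliques n) (hcard : E.edgeFinset.card = ℓ) (hℓ : (ℓ : ℝ) ≤ (n : ℝ) / 8) :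
    ((((twoCliques n)ᶜ ⊔ E).triangleNu : ℝ) + ((((twoCliques n)ᶜ ⊔ E)ᶜ).triangleNu : ℝ)
        ≤ 2 * ((n / 2).choose 2 : ℝ) + 2 * (ℓ : ℝ)) ∧
    2 * ((n / 2).choose 2 : ℝ) + 2 * (ℓ : ℝ) ≤ (n : ℝ) * ((n : ℝ) - 1) / 4 := by
  obtain ⟨m, rfl⟩ := hn
  have hm : (m + m) / 2 = m := by omega
  have hcompl : ((twoCliques (m + m))ᶜ ⊔ E)ᶜ = twoCliques (m + m) \ E := by
    rw [compl_sup, compl_compl, sdiff_eq]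
  have hG := triangleNu_compl_twoCliques_sup_le E
  have hGc := triangleNu_sdiff_add_card_edgeFinset_le hE
  rw [card_edgeFinset_twoCliques, hm, Nat.add_sub_cancel] at hGc
  rw [hcompl, hm]
  subst hcard
  constructor
  · exact_mod_cast (by omega : _ ≤ 2 * m.choose 2 + 2 * #E.edgeFinset)
  · rw [Nat.cast_choose_two]
    push_cast at hℓ ⊢
    nlinarith
end
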